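/- For the Grushin inversion, the mixed (off-diagonal) Jacobian combinations all vanish: for i ≠ i′, Σ_k (∂x_i/∂x̃_k)(∂x_{i′}/∂x̃_k) + |x̃|^{2γ} Σ_h (∂x_i/∂ỹ_h)(∂x_{i′}/∂ỹ_h) = 0; for j ≠ j′, Σ_k (∂y_j/∂x̃_k)(∂y_{j′}/∂x̃_k) + |x̃|^{2γ} Σ_h (∂y_j/∂ỹ_h)(∂y_{j′}/∂ỹ_h) = 0; and for all i,j, Σ_k (∂x_i/∂x̃_k)(∂y_j/∂x̃_k) + |x̃|^{2γ} Σ_h (∂x_i/∂ỹ_h)(∂y_j/∂ỹ_h) = 0. -/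

import Mathlib

/-!
Put `A = d(z,0)^{2+2γ}` (`grushinGauge`), so that the inversion is `x ↦ x A^{-1/(1+γ)}`,
`y ↦ y A^{-1}`, and pair gradients as the Grushin operator does:
`⟨∇f, ∇g⟩ = ∇ₓf·∇ₓg + c ∇_y f·∇_y g` with `c = |x|^{2γ}`. The coordinate gradients are pairwise
orthogonal, and `⟨∇xᵢ, ∇A⟩ = 2c xᵢ/(1+γ)`, `⟨∇yⱼ, ∇A⟩ = 2c yⱼ`, `⟨∇A, ∇A⟩ = 4cA`. So every
coordinate `u` is sent to `u A^{-p}`, where `p` is the exponent with `⟨∇u, ∇A⟩ = 2cpu`; since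
`∇(u A^{-p}) = A^{-p} (∇u - (pu/A) ∇A)`, the pairing of two such gradients is
`A^{-p-q} (-2cpq uv/A - 2cpq uv/A + 4cpq uv/A) = 0`.
-/

open MeasureTheory Real

noncomputable section

variable {N l : ℕ}

/-- squared Euclidean norm -/
def nsq {n : ℕ} (x : Fin n → ℝ) : ℝ := ∑ i, x i ^ 2

/-- partial derivative in the `i`-th `x` direction -/
def pdx (u : (Fin N → ℝ) × (Fin l → ℝ) → ℝ) (i : Fin N)
    (z : (Fin N → ℝ) × (Fin l → ℝ)) : ℝ :=
  deriv (fun t => u (Function.update z.1 i t, z.2)) (z.1 i)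

/-- partial derivative in the `j`-th `y` direction -/
def pdy (u : (Fin N → ℝ) × (Fin l → ℝ) → ℝ) (j : Fin l)
    (z : (Fin N → ℝ) × (Fin l → ℝ)) : ℝ :=
  deriv (fun t => u (z.1, Function.update z.2 j t)) (z.2 j)

/-- Grushin operator `Δ_γ u = Δ_x u + |x|^{2γ} Δ_y u` -/
def grushinLap (γ : ℝ) (u : (Fin N → ℝ) × (Fin l → ℝ) → ℝ)
    (z : (Fin N → ℝ) × (Fin l → ℝ)) : ℝ :=
  (∑ i, pdx (pdx u i) i z) + (nsq z.1) ^ γ * ∑ j, pdy (pdy u j) j z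

/-- the Grushin distance to the origin:
`d(z,0) = ((1/(1+γ)²)|x|^{2+2γ} + |y|²)^{1/(2+2γ)}` (note `|x|^{2+2γ} = (nsq x)^{1+γ}`). -/
def gd (γ : ℝ) (z : (Fin N → ℝ) × (Fin l → ℝ)) : ℝ :=
  ((1 / (1 + γ) ^ 2) * (nsq z.1) ^ (1 + γ) + nsq z.2) ^ (1 / (2 + 2 * γ))

/-- the Grushin inversion `x̃ = x/d², ỹ = y/d^{2+2γ}` -/
def ginv (γ : ℝ) (z : (Fin N → ℝ) × (Fin l → ℝ)) : (Fin N → ℝ) × (Fin l → ℝ) :=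
  (fun i => z.1 i / gd γ z ^ 2, fun j => z.2 j / gd γ z ^ (2 + 2 * γ))

/-- divergence of a vector field on `ℝ^N × ℝ^l` -/
def gdiv (X : (Fin N → ℝ) × (Fin l → ℝ) → (Fin N → ℝ) × (Fin l → ℝ))
    (z : (Fin N → ℝ) × (Fin l → ℝ)) : ℝ :=
  (∑ i, pdx (fun w => (X w).1 i) i z) + ∑ j, pdy (fun w => (X w).2 j) j z

/-- Euclidean dot product on `ℝ^N × ℝ^l` -/
def gdot (v w : (Fin N → ℝ) × (Fin l → ℝ)) : ℝ :=
  (∑ i, v.1 i * w.1 i) + ∑ j, v.2 j * w.2 j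

def grushinGrad (f : (Fin N → ℝ) × (Fin l → ℝ) → ℝ) (z : (Fin N → ℝ) × (Fin l → ℝ)) :
    (Fin N → ℝ) × (Fin l → ℝ) :=
  (fun k => pdx f k z, fun h => pdy f h z)

def grushinPair (c : ℝ) (v w : (Fin N → ℝ) × (Fin l → ℝ)) : ℝ :=
  v.1 ⬝ᵥ w.1 + c * v.2 ⬝ᵥ w.2

def grushinGauge (γ : ℝ) (z : (Fin N → ℝ) × (Fin l → ℝ)) : ℝ :=
  1 / (1 + γ) ^ 2 * nsq z.1 ^ (1 + γ) + nsq z.2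

theorem grushinPair_grushinGrad (c : ℝ) (f g : (Fin N → ℝ) × (Fin l → ℝ) → ℝ)
    (z : (Fin N → ℝ) × (Fin l → ℝ)) :
    grushinPair c (grushinGrad f z) (grushinGrad g z)
      = (∑ k, pdx f k z * pdx g k z) + c * ∑ h, pdy f h z * pdy g h z :=
  rfl

theorem grushinPair_smul_sub_smul_eq_zero {c p q a b s t A : ℝ}
    {gu gv G : (Fin N → ℝ) × (Fin l → ℝ)} (hA : A ≠ 0)
    (huv : grushinPair c gu gv = 0) (huG : grushinPair c gu G = 2 * c * p * a)
    (hvG : grushinPair c gv G = 2 * c * q * b) (hGG : grushinPair c G G = 4 * c * A) :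
    grushinPair c (s • (gu - (p * a / A) • G)) (t • (gv - (q * b / A) • G)) = 0 := by
  have hGv : grushinPair c G gv = 2 * c * q * b := by
    rw [← hvG, grushinPair, grushinPair, dotProduct_comm G.1, dotProduct_comm G.2]
  have expand : grushinPair c (s • (gu - (p * a / A) • G)) (t • (gv - (q * b / A) • G))
      = s * t * (grushinPair c gu gv - q * b / A * grushinPair c gu G
        - p * a / A * grushinPair c G gv + p * a / A * (q * b / A) * grushinPair c G G) := by
    simp only [grushinPair, Prod.smul_fst, Prod.smul_snd, Prod.fst_sub, Prod.snd_sub,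
      smul_dotProduct, dotProduct_smul, sub_dotProduct, dotProduct_sub, smul_eq_mul]
    ring
  rw [expand, huv, huG, hGv, hGG]
  field_simp
  ring

theorem dotProduct_self_eq_nsq {n : ℕ} (x : Fin n → ℝ) : x ⬝ᵥ x = nsq x := by
  simp only [dotProduct, nsq, sq]

theorem nsq_nonneg {n : ℕ} (x : Fin n → ℝ) : 0 ≤ nsq x :=
  Finset.sum_nonneg fun i _ => sq_nonneg (x i)

theorem nsq_pos {n : ℕ} {x : Fin n → ℝ} (hx : x ≠ 0) : 0 < nsq x := by
  obtain ⟨i, hi⟩ := Function.ne_iff.1 hx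
  exact Finset.sum_pos' (fun i _ => sq_nonneg (x i)) ⟨i, Finset.mem_univ i, sq_pos_of_ne_zero hi⟩

theorem hasFDerivAt_nsq {n : ℕ} (x : Fin n → ℝ) :
    HasFDerivAt nsq (∑ i, (2 * x i) • (ContinuousLinearMap.proj i : (Fin n → ℝ) →L[ℝ] ℝ)) x := by
  unfold nsq
  refine HasFDerivAt.fun_sum fun i _ => ?_
  simpa [Function.comp_def] using
    (hasDerivAt_pow 2 (x i)).comp_hasFDerivAt x (hasFDerivAt_apply (𝕜 := ℝ) i x)

section Calculus

variable {f u v A : (Fin N → ℝ) × (Fin l → ℝ) → ℝ}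
  {f' : (Fin N → ℝ) × (Fin l → ℝ) →L[ℝ] ℝ} {z : (Fin N → ℝ) × (Fin l → ℝ)}

theorem HasFDerivAt.grushinGrad_eq (hf : HasFDerivAt f f' z) :
    grushinGrad f z = (fun k => f' (Pi.single k 1, 0), fun h => f' (0, Pi.single h 1)) := by
  refine Prod.ext (funext fun k => ?_) (funext fun h => ?_)
  · exact (hf.comp_hasDerivAt_of_eq _ ((hasDerivAt_update z.1 k _).prodMk
      (hasDerivAt_const _ z.2)) (by simp)).deriv
  · exact (hf.comp_hasDerivAt_of_eq _ ((hasDerivAt_const _ z.1).prodMk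
      (hasDerivAt_update z.2 h _)) (by simp)).deriv

theorem grushinGrad_fst_apply (i : Fin N) :
    grushinGrad (fun w => w.1 i) z = (Pi.single i 1, 0) := by
  have h : HasFDerivAt (fun w => w.1 i) _ z :=
    (hasFDerivAt_apply (𝕜 := ℝ) i z.1).comp z hasFDerivAt_fst
  rw [h.grushinGrad_eq]
  ext k <;> simp [Pi.single_apply, eq_comm]

theorem grushinGrad_snd_apply (j : Fin l) :
    grushinGrad (fun w => w.2 j) z = (0, Pi.single j 1) := by
  have h : HasFDerivAt (fun w => w.2 j) _ z :=
    (hasFDerivAt_apply (𝕜 := ℝ) j z.2).comp z hasFDerivAt_snd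
  rw [h.grushinGrad_eq]
  ext k <;> simp [Pi.single_apply, eq_comm]

theorem grushinGrad_mul_rpow_neg (hu : DifferentiableAt ℝ u z) (hA : DifferentiableAt ℝ A z)
    (hA0 : 0 < A z) (p : ℝ) :
    grushinGrad (fun w => u w * A w ^ (-p)) z
      = A z ^ (-p) • (grushinGrad u z - (p * u z / A z) • grushinGrad A z) := by
  have hAp := hA.hasFDerivAt.rpow_const (p := -p) (Or.inl hA0.ne')
  rw [(hu.hasFDerivAt.fun_mul hAp).grushinGrad_eq, hu.hasFDerivAt.grushinGrad_eq,
    hA.hasFDerivAt.grushinGrad_eq, Real.rpow_sub_one hA0.ne']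
  ext <;> simp only [add_apply, smul_apply, smul_eq_mul,
    Prod.smul_mk, Prod.mk_sub_mk, Pi.smul_apply, Pi.sub_apply] <;> field_simp <;> ring

theorem grushinPair_grushinGrad_mul_rpow_neg_eq_zero {c p q : ℝ} (hu : DifferentiableAt ℝ u z)
    (hv : DifferentiableAt ℝ v z) (hA : DifferentiableAt ℝ A z) (hA0 : 0 < A z)
    (huv : grushinPair c (grushinGrad u z) (grushinGrad v z) = 0)
    (huA : grushinPair c (grushinGrad u z) (grushinGrad A z) = 2 * c * p * u z)
    (hvA : grushinPair c (grushinGrad v z) (grushinGrad A z) = 2 * c * q * v z)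
    (hAA : grushinPair c (grushinGrad A z) (grushinGrad A z) = 4 * c * A z) :
    grushinPair c (grushinGrad (fun w => u w * A w ^ (-p)) z)
      (grushinGrad (fun w => v w * A w ^ (-q)) z) = 0 := by
  rw [grushinGrad_mul_rpow_neg hu hA hA0, grushinGrad_mul_rpow_neg hv hA hA0]
  exact grushinPair_smul_sub_smul_eq_zero hA0.ne' huv huA hvA hAA

end Calculus

section Gauge

variable {γ : ℝ} {z : (Fin N → ℝ) × (Fin l → ℝ)}

theorem grushinGauge_nonneg (z : (Fin N → ℝ) × (Fin l → ℝ)) : 0 ≤ grushinGauge γ z := by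
  have hx := Real.rpow_nonneg (nsq_nonneg z.1) (1 + γ)
  have hy := nsq_nonneg z.2
  unfold grushinGauge
  positivity

theorem grushinGauge_pos (hγ : 1 + γ ≠ 0) (hx : z.1 ≠ 0) : 0 < grushinGauge γ z := by
  have hx' := Real.rpow_pos_of_pos (nsq_pos hx) (1 + γ)
  have hy := nsq_nonneg z.2
  unfold grushinGauge
  positivity

theorem differentiableAt_grushinGauge (hx : z.1 ≠ 0) :
    DifferentiableAt ℝ (grushinGauge γ) z := by
  have hx' := nsq_pos hx
  unfold grushinGauge nsq
  fun_prop (disch := exact Or.inl hx'.ne')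

theorem grushinGrad_grushinGauge (hγ : 1 + γ ≠ 0) (hx : z.1 ≠ 0) :
    grushinGrad (grushinGauge γ) z = ((2 * nsq z.1 ^ γ / (1 + γ)) • z.1, (2 : ℝ) • z.2) := by
  have h : HasFDerivAt (grushinGauge γ) _ z :=
    ((((hasFDerivAt_nsq z.1).comp z hasFDerivAt_fst).rpow_const (p := 1 + γ)
      (Or.inl (nsq_pos hx).ne')).const_mul (1 / (1 + γ) ^ 2)).fun_add
      ((hasFDerivAt_nsq z.2).comp z hasFDerivAt_snd)
  rw [h.grushinGrad_eq]
  ext k <;> simp only [add_apply, smul_apply, sum_apply, Function.comp_apply,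
    ContinuousLinearMap.comp_apply, ContinuousLinearMap.coe_fst', ContinuousLinearMap.coe_snd',
    ContinuousLinearMap.proj_apply, Pi.single_apply, Pi.zero_apply, Pi.smul_apply, smul_eq_mul,
    mul_ite, mul_one, mul_zero, Finset.sum_ite_eq', Finset.mem_univ, if_true,
    Finset.sum_const_zero, add_zero, zero_add, add_sub_cancel_left]
  field_simp

theorem grushinPair_grushinGrad_fst_grushinGauge (hγ : 1 + γ ≠ 0) (hx : z.1 ≠ 0) (i : Fin N) :
    grushinPair (nsq z.1 ^ γ) (grushinGrad (fun w => w.1 i) z) (grushinGrad (grushinGauge γ) z)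
      = 2 * nsq z.1 ^ γ * (1 / (1 + γ)) * z.1 i := by
  rw [grushinGrad_fst_apply, grushinGrad_grushinGauge hγ hx]
  simp only [grushinPair, single_dotProduct, Pi.smul_apply, smul_eq_mul, zero_dotProduct,
    mul_zero, add_zero]
  ring

theorem grushinPair_grushinGrad_snd_grushinGauge (hγ : 1 + γ ≠ 0) (hx : z.1 ≠ 0) (j : Fin l) :
    grushinPair (nsq z.1 ^ γ) (grushinGrad (fun w => w.2 j) z) (grushinGrad (grushinGauge γ) z)
      = 2 * nsq z.1 ^ γ * 1 * z.2 j := by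
  rw [grushinGrad_snd_apply, grushinGrad_grushinGauge hγ hx]
  simp only [grushinPair, dotProduct_smul, zero_dotProduct, single_dotProduct, smul_eq_mul,
    mul_zero, zero_add]
  ring

theorem grushinPair_grushinGrad_grushinGauge_self (hγ : 1 + γ ≠ 0) (hx : z.1 ≠ 0) :
    grushinPair (nsq z.1 ^ γ) (grushinGrad (grushinGauge γ) z) (grushinGrad (grushinGauge γ) z)
      = 4 * nsq z.1 ^ γ * grushinGauge γ z := by
  have hρ : nsq z.1 ^ (1 + γ) = nsq z.1 ^ γ * nsq z.1 := by
    rw [add_comm, Real.rpow_add_one (nsq_pos hx).ne']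
  rw [grushinGrad_grushinGauge hγ hx, grushinPair, grushinGauge, hρ]
  simp only [smul_dotProduct, dotProduct_smul, smul_eq_mul, dotProduct_self_eq_nsq]
  field_simp
  ring

theorem gd_sq (hγ : 1 + γ ≠ 0) (z : (Fin N → ℝ) × (Fin l → ℝ)) :
    gd γ z ^ 2 = grushinGauge γ z ^ (1 / (1 + γ)) := by
  rw [show gd γ z = grushinGauge γ z ^ (1 / (2 + 2 * γ)) from rfl, ← Real.rpow_natCast,
    ← Real.rpow_mul (grushinGauge_nonneg z)]
  congr 1
  field_simp
  ring

theorem gd_rpow_two_add_two_mul (hγ : 1 + γ ≠ 0) (z : (Fin N → ℝ) × (Fin l → ℝ)) :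
    gd γ z ^ (2 + 2 * γ) = grushinGauge γ z := by
  have h2 : (2 : ℝ) + 2 * γ ≠ 0 := by contrapose! hγ; linarith
  rw [show gd γ z = grushinGauge γ z ^ (1 / (2 + 2 * γ)) from rfl,
    ← Real.rpow_mul (grushinGauge_nonneg z), one_div_mul_cancel h2, Real.rpow_one]

theorem ginv_fst_apply (hγ : 1 + γ ≠ 0) (z : (Fin N → ℝ) × (Fin l → ℝ)) (i : Fin N) :
    (ginv γ z).1 i = z.1 i * grushinGauge γ z ^ (-(1 / (1 + γ))) := by
  rw [show (ginv γ z).1 i = z.1 i / gd γ z ^ 2 from rfl, gd_sq hγ,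
    Real.rpow_neg (grushinGauge_nonneg z)]
  exact div_eq_mul_inv _ _

theorem ginv_snd_apply (hγ : 1 + γ ≠ 0) (z : (Fin N → ℝ) × (Fin l → ℝ)) (j : Fin l) :
    (ginv γ z).2 j = z.2 j * grushinGauge γ z ^ (-1 : ℝ) := by
  rw [show (ginv γ z).2 j = z.2 j / gd γ z ^ (2 + 2 * γ) from rfl, gd_rpow_two_add_two_mul hγ,
    Real.rpow_neg_one]
  exact div_eq_mul_inv _ _

end Gauge

/-- the mixed (off-diagonal) Jacobian combinations of the Grushin
inversion all vanish. -/
theorem ginv_jacobian_off_diag (γ : ℝ) (hγ : 0 ≤ γ)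
    (z : (Fin N → ℝ) × (Fin l → ℝ)) (hx : z.1 ≠ 0) :
    (∀ i i' : Fin N, i ≠ i' →
      (∑ k, pdx (fun w => (ginv γ w).1 i) k z * pdx (fun w => (ginv γ w).1 i') k z)
        + (nsq z.1) ^ γ *
            ∑ h, pdy (fun w => (ginv γ w).1 i) h z * pdy (fun w => (ginv γ w).1 i') h z
        = 0) ∧
    (∀ j j' : Fin l, j ≠ j' →
      (∑ k, pdx (fun w => (ginv γ w).2 j) k z * pdx (fun w => (ginv γ w).2 j') k z)
        + (nsq z.1) ^ γ *
            ∑ h, pdy (fun w => (ginv γ w).2 j) h z * pdy (fun w => (ginv γ w).2 j') h z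
        = 0) ∧
    (∀ (i : Fin N) (j : Fin l),
      (∑ k, pdx (fun w => (ginv γ w).1 i) k z * pdx (fun w => (ginv γ w).2 j) k z)
        + (nsq z.1) ^ γ *
            ∑ h, pdy (fun w => (ginv γ w).1 i) h z * pdy (fun w => (ginv γ w).2 j) h z
        = 0) := by
  have hγ' : 1 + γ ≠ 0 := by positivity
  have hAd := differentiableAt_grushinGauge (γ := γ) hx
  have hA0 := grushinGauge_pos hγ' hx
  have hAA := grushinPair_grushinGrad_grushinGauge_self hγ' hx
  have hxA := grushinPair_grushinGrad_fst_grushinGauge hγ' hx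
  have hyA := grushinPair_grushinGrad_snd_grushinGauge hγ' hx
  refine ⟨fun i i' hii' => ?_, fun j j' hjj' => ?_, fun i j => ?_⟩ <;>
    rw [← grushinPair_grushinGrad] <;> simp only [ginv_fst_apply hγ', ginv_snd_apply hγ']
  · refine grushinPair_grushinGrad_mul_rpow_neg_eq_zero (by fun_prop) (by fun_prop) hAd hA0
      ?_ (hxA i) (hxA i') hAA
    simp [grushinGrad_fst_apply, grushinPair, hii']
  · refine grushinPair_grushinGrad_mul_rpow_neg_eq_zero (by fun_prop) (by fun_prop) hAd hA0
      ?_ (hyA j) (hyA j') hAA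
    simp [grushinGrad_snd_apply, grushinPair, hjj']
  · refine grushinPair_grushinGrad_mul_rpow_neg_eq_zero (by fun_prop) (by fun_prop) hAd hA0
      ?_ (hxA i) (hyA j) hAA
    simp [grushinGrad_fst_apply, grushinGrad_snd_apply, grushinPair]
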